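/- The diagonal of the Bessel kernel of order a satisfies: lim_{y→x} [J_a(√x)√y J_a'(√y) − J_a'(√x)√x J_a(√y)]/(2(x−y)) = [(J_a(√x))² − J_{a+1}(√x) J_{a−1}(√x)]/4 for x > 0. -/

import Mathlib

open MeasureTheory Real Filter Finset intervalIntegral

/-- Jacobi polynomial `P_n^{(a,b)}` via the explicit hypergeometric-type sum,
normalized so that `P_n^{(a,b)}(1) = Γ(n+a+1)/(n! Γ(a+1))`. -/
noncomputable def jacobiP (a b : ℝ) (n : ℕ) (x : ℝ) : ℝ :=
  (Real.Gamma (a + n + 1) / (n.factorial * Real.Gamma (a + b + (n : ℝ) + 1))) *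
    ∑ m ∈ Finset.range (n + 1),
      (n.choose m : ℝ) * Real.Gamma (a + b + (n : ℝ) + m + 1) / Real.Gamma (a + (m : ℝ) + 1) *
        ((x - 1) / 2) ^ m

/-- Squared norm `h_j^{(a,b)}` of the Jacobi polynomials. -/
noncomputable def jacobiH (a b : ℝ) (j : ℕ) : ℝ :=
  2 ^ (a + b + 1) * Real.Gamma ((j : ℝ) + a + 1) * Real.Gamma ((j : ℝ) + b + 1) /
    (j.factorial * (2 * (j : ℝ) + a + b + 1) * Real.Gamma ((j : ℝ) + a + b + 1))

/-- Orthonormalized Jacobi functions `φ_j`. -/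
noncomputable def jacobiPhi (a b : ℝ) (j : ℕ) (x : ℝ) : ℝ :=
  jacobiP a b j x * (1 - x) ^ (a / 2) * (1 + x) ^ (b / 2) / Real.sqrt (jacobiH a b j)

/-- Bessel function of the first kind of order `ν` (series definition). -/
noncomputable def besselJ (ν : ℝ) (t : ℝ) : ℝ :=
  ∑' m : ℕ, (-1 : ℝ) ^ m / (m.factorial * Real.Gamma ((m : ℝ) + ν + 1)) *
    (t / 2) ^ (2 * (m : ℝ) + ν)

/-- Christoffel–Darboux kernel of the Jacobi unitary ensemble. -/
noncomputable def K2 (a b : ℝ) (N : ℕ) (x y : ℝ) : ℝ :=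
  ∑ j ∈ Finset.range N, jacobiPhi a b j x * jacobiPhi a b j y

/-- The operator `ε`: `(εg)(x) = (1/2)(∫_{-1}^x g - ∫_x^1 g)`. -/
noncomputable def epsOp (g : ℝ → ℝ) (x : ℝ) : ℝ :=
  (1 / 2) * ((∫ y in (-1 : ℝ)..x, g y) - ∫ y in x..(1 : ℝ), g y)

/-- The Bessel kernel of order `a`. -/
noncomputable def besselKernel (a : ℝ) (x y : ℝ) : ℝ :=
  (besselJ a (Real.sqrt x) * Real.sqrt y * deriv (besselJ a) (Real.sqrt y) -
      deriv (besselJ a) (Real.sqrt x) * Real.sqrt x * besselJ a (Real.sqrt y)) /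
    (2 * (x - y))

/-!
Write `J_ν(t) = (t/2)^ν F_ν(t²/4)` with the entire series `F_ν(z) = ∑ (-1)^m z^m / (m! Γ(m+ν+1))`.
Termwise differentiation gives `F_ν' = -F_{ν+1}`, and `1/Γ(w) = w/Γ(w+1)` gives
`F_{ν-1} = ν F_ν - z F_{ν+1}`; hence `J_ν' = (ν/t) J_ν - J_{ν+1}`,
`J_{ν-1} + J_{ν+1} = (2ν/t) J_ν` and Bessel's equation `t² J_ν'' + t J_ν' + (t² - ν²) J_ν = 0`.

The kernel is `-1/2` times the difference quotient at `x` of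
`f(y) = J(√x) √y J'(√y) - J'(√x) √x J(√y)`, which vanishes at `y = x`, so its limit is `-f'(x)/2`.
Bessel's equation eliminates `J''`, leaving `((1 - a²/x) J² + J'²)/4`, which the two recurrences
turn into `(J_a² - J_{a+1} J_{a-1})/4`.
-/

open Topology

theorem Real.inv_Gamma_eq_self_mul_inv_Gamma_add_one (s : ℝ) :
    (Gamma s)⁻¹ = s * (Gamma (s + 1))⁻¹ := by
  rcases ne_or_eq s 0 with h | rfl
  · rw [Gamma_add_one h, mul_inv, mul_inv_cancel_left₀ h]
  · rw [zero_add, Gamma_zero, inv_zero, zero_mul]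

theorem Real.one_le_Gamma_of_two_le {s : ℝ} (hs : 2 ≤ s) : 1 ≤ Gamma s := by
  rcases hs.eq_or_lt with rfl | hs'
  · rw [Gamma_two]
  · simpa only [Gamma_two] using
      (Gamma_strictMonoOn_Ici (Set.mem_Ici.2 le_rfl) (Set.mem_Ici.2 hs) hs').le

noncomputable def besselCoeff (ν : ℝ) (m : ℕ) : ℝ :=
  (-1 : ℝ) ^ m / (m.factorial * Gamma ((m : ℝ) + ν + 1))

noncomputable def besselSeries (ν z : ℝ) : ℝ := ∑' m : ℕ, besselCoeff ν m * z ^ m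

theorem besselCoeff_sub_one (ν : ℝ) (m : ℕ) :
    besselCoeff (ν - 1) m = (m + ν) * besselCoeff ν m := by
  rw [besselCoeff, besselCoeff, show (m : ℝ) + (ν - 1) + 1 = m + ν by ring,
    div_eq_mul_inv, div_eq_mul_inv, mul_inv, mul_inv,
    Real.inv_Gamma_eq_self_mul_inv_Gamma_add_one]
  ring

theorem succ_mul_besselCoeff_succ (ν : ℝ) (m : ℕ) :
    (m + 1) * besselCoeff ν (m + 1) = -besselCoeff (ν + 1) m := by
  have hm : (m : ℝ) + 1 ≠ 0 := by positivity
  rw [besselCoeff, besselCoeff, Nat.factorial_succ, Nat.cast_mul, Nat.cast_succ,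
    show (m : ℝ) + 1 + ν + 1 = m + (ν + 1) + 1 by ring, pow_succ,
    div_eq_mul_inv, div_eq_mul_inv, mul_inv, mul_inv, mul_inv]
  field_simp

theorem abs_besselCoeff_le {ν : ℝ} {m : ℕ} (h : 1 ≤ m + ν) :
    |besselCoeff ν m| ≤ (m.factorial : ℝ)⁻¹ := by
  have hΓ : 1 ≤ Gamma ((m : ℝ) + ν + 1) := Real.one_le_Gamma_of_two_le (by linarith)
  have hm : (0 : ℝ) < m.factorial := by positivity
  rw [besselCoeff, abs_div, abs_pow, abs_neg, abs_one, one_pow, abs_of_pos (by positivity),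
    one_div]
  exact inv_anti₀ hm (le_mul_of_one_le_right hm.le hΓ)

theorem eventually_abs_besselCoeff_le (ν : ℝ) :
    ∀ᶠ m : ℕ in atTop, |besselCoeff ν m| ≤ (m.factorial : ℝ)⁻¹ := by
  obtain ⟨M, hM⟩ := exists_nat_ge (1 - ν)
  filter_upwards [eventually_ge_atTop M] with m hm
  exact abs_besselCoeff_le (by linarith [(Nat.cast_le (α := ℝ)).2 hm])

theorem summable_besselCoeff_mul_pow (ν z : ℝ) :
    Summable fun m : ℕ => besselCoeff ν m * z ^ m := by
  refine .of_norm_bounded_eventually_nat (Real.summable_pow_div_factorial |z|) ?_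
  filter_upwards [eventually_abs_besselCoeff_le ν] with m hm
  rw [norm_mul, norm_pow, Real.norm_eq_abs, Real.norm_eq_abs, div_eq_inv_mul]
  exact mul_le_mul_of_nonneg_right hm (by positivity) |>.trans_eq (by ring)

theorem summable_mul_abs_besselCoeff_mul_pow (ν : ℝ) {R : ℝ} (hR : 0 ≤ R) :
    Summable fun m : ℕ => m * |besselCoeff ν m| * R ^ m := by
  refine .of_norm_bounded_eventually_nat (Real.summable_pow_div_factorial (2 * R)) ?_
  filter_upwards [eventually_abs_besselCoeff_le ν] with m hm
  have hm2 : (m : ℝ) ≤ 2 ^ m := by exact_mod_cast (Nat.lt_two_pow_self (n := m)).le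
  rw [Real.norm_of_nonneg (by positivity), mul_pow, div_eq_mul_inv]
  calc (m : ℝ) * |besselCoeff ν m| * R ^ m ≤ 2 ^ m * (m.factorial : ℝ)⁻¹ * R ^ m := by gcongr
    _ = 2 ^ m * R ^ m * (m.factorial : ℝ)⁻¹ := by ring

theorem hasSum_besselCoeff_mul_deriv_pow (ν z : ℝ) :
    HasSum (fun m : ℕ => besselCoeff ν m * (m * z ^ (m - 1))) (-besselSeries (ν + 1) z) := by
  rw [← hasSum_nat_add_iff' 1]
  convert (summable_besselCoeff_mul_pow (ν + 1) z).hasSum.neg using 1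
  · ext m
    rw [neg_mul_eq_neg_mul, ← succ_mul_besselCoeff_succ, Nat.add_sub_cancel]
    push_cast
    ring
  · simp [besselSeries]

theorem hasDerivAt_besselSeries (ν z : ℝ) :
    HasDerivAt (besselSeries ν) (-besselSeries (ν + 1) z) z := by
  set R := |z| + 1
  have hR : 1 ≤ R := le_add_of_nonneg_left (abs_nonneg z)
  have hz : z ∈ Set.Ioo (-R) R := abs_lt.1 (lt_add_one _)
  rw [← (hasSum_besselCoeff_mul_deriv_pow ν z).tsum_eq]
  refine hasDerivAt_tsum_of_isPreconnected
    (summable_mul_abs_besselCoeff_mul_pow ν (zero_le_one.trans hR)) isOpen_Ioo isPreconnected_Ioo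
    (fun m y _ => (hasDerivAt_pow m y).const_mul _)
    (fun m y hy => ?_) hz (summable_besselCoeff_mul_pow ν z) hz
  have hyR : |y| ≤ R := abs_le.2 ⟨hy.1.le, hy.2.le⟩
  rw [norm_mul, norm_mul, norm_pow, Real.norm_eq_abs, Real.norm_eq_abs, Nat.abs_cast]
  calc |besselCoeff ν m| * (m * |y| ^ (m - 1)) ≤ |besselCoeff ν m| * (m * R ^ m) := by
        gcongr
        exact (pow_le_pow_left₀ (abs_nonneg y) hyR _).trans (pow_le_pow_right₀ hR (m.sub_le 1))
    _ = m * |besselCoeff ν m| * R ^ m := by ring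

theorem besselSeries_sub_one (ν z : ℝ) :
    besselSeries (ν - 1) z = ν * besselSeries ν z - z * besselSeries (ν + 1) z := by
  have hterm (m : ℕ) : ν * (besselCoeff ν m * z ^ m) + z * (besselCoeff ν m * (m * z ^ (m - 1))) =
      besselCoeff (ν - 1) m * z ^ m := by
    rw [besselCoeff_sub_one]
    rcases m with _ | m
    · simp
    · simp only [Nat.add_sub_cancel, pow_succ]
      push_cast
      ring
  have h := ((summable_besselCoeff_mul_pow ν z).hasSum.mul_left ν).add
    ((hasSum_besselCoeff_mul_deriv_pow ν z).mul_left z)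
  simp only [hterm, mul_neg, ← sub_eq_add_neg] at h
  exact (summable_besselCoeff_mul_pow (ν - 1) z).hasSum.unique h

theorem besselJ_eq_rpow_mul_besselSeries (ν : ℝ) {t : ℝ} (ht : 0 < t) :
    besselJ ν t = (t / 2) ^ ν * besselSeries ν ((t / 2) ^ 2) := by
  rw [besselJ, besselSeries, ← tsum_mul_left]
  congr 1 with m
  rw [Real.rpow_add (by positivity), Real.rpow_mul_natCast (by positivity), Real.rpow_two,
    besselCoeff]
  ring

theorem hasDerivAt_besselJ (ν : ℝ) {t : ℝ} (ht : 0 < t) :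
    HasDerivAt (besselJ ν) (ν / t * besselJ ν t - besselJ (ν + 1) t) t := by
  have ht2 : t / 2 ≠ 0 := by positivity
  have hhalf := (hasDerivAt_id' t).div_const 2
  have hJ : besselJ ν =ᶠ[𝓝 t] fun u => (u / 2) ^ ν * besselSeries ν ((u / 2) ^ 2) := by
    filter_upwards [Ioi_mem_nhds ht] with u hu
    exact besselJ_eq_rpow_mul_besselSeries ν hu
  refine (((hhalf.rpow_const (Or.inl ht2)).mul
    ((hasDerivAt_besselSeries ν _).comp t (hhalf.pow 2))).congr_of_eventuallyEq hJ).congr_deriv ?_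
  simp only [Function.comp_apply, Pi.pow_apply]
  rw [besselJ_eq_rpow_mul_besselSeries ν ht, besselJ_eq_rpow_mul_besselSeries (ν + 1) ht,
    Real.rpow_sub_one ht2, Real.rpow_add_one ht2]
  field_simp
  ring

theorem besselJ_sub_one (ν : ℝ) {t : ℝ} (ht : 0 < t) :
    besselJ (ν - 1) t = 2 * ν / t * besselJ ν t - besselJ (ν + 1) t := by
  have ht2 : t / 2 ≠ 0 := by positivity
  rw [besselJ_eq_rpow_mul_besselSeries (ν - 1) ht, besselJ_eq_rpow_mul_besselSeries ν ht,
    besselJ_eq_rpow_mul_besselSeries (ν + 1) ht, besselSeries_sub_one,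
    Real.rpow_sub_one ht2, Real.rpow_add_one ht2]
  field_simp

theorem hasDerivAt_deriv_besselJ (ν : ℝ) {t : ℝ} (ht : 0 < t) :
    HasDerivAt (deriv (besselJ ν))
      (-deriv (besselJ ν) t / t - (1 - ν ^ 2 / t ^ 2) * besselJ ν t) t := by
  have hderiv : deriv (besselJ ν) =ᶠ[𝓝 t] fun u => ν * u⁻¹ * besselJ ν u - besselJ (ν + 1) u := by
    filter_upwards [Ioi_mem_nhds ht] with u hu
    rw [(hasDerivAt_besselJ ν hu).deriv, div_eq_mul_inv]
  have hrec := besselJ_sub_one (ν + 1) ht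
  rw [add_sub_cancel_right] at hrec
  refine ((((hasDerivAt_inv ht.ne').const_mul ν).mul (hasDerivAt_besselJ ν ht)).sub
    (hasDerivAt_besselJ (ν + 1) ht)).congr_of_eventuallyEq hderiv |>.congr_deriv ?_
  rw [hderiv.eq_of_nhds, hrec]
  field_simp
  ring

theorem tendsto_sqrt_wronskian_div_sub {g h : ℝ → ℝ} {x c : ℝ} (hx : 0 < x)
    (hg : HasDerivAt g (h √x) √x) (hh : HasDerivAt h c √x) :
    Tendsto (fun y => (g √x * √y * h √y - h √x * √x * g √y) / (2 * (x - y))) (𝓝[≠] x)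
      (𝓝 ((√x * h √x ^ 2 - g √x * h √x - √x * g √x * c) / (4 * √x))) := by
  set s := √x with hs_def
  have hs : 0 < s := Real.sqrt_pos.2 hx
  set f : ℝ → ℝ := fun y => g s * √y * h √y - h s * s * g √y
  have hsqrt : HasDerivAt Real.sqrt (1 / (2 * s)) x := Real.hasDerivAt_sqrt hx.ne'
  have hf : HasDerivAt f (g s * (1 / (2 * s)) * h s + g s * s * (c * (1 / (2 * s))) -
      h s * s * (h s * (1 / (2 * s)))) x := ((hsqrt.const_mul (g s)).mul (hh.comp x hsqrt)).sub
    ((hg.comp x hsqrt).const_mul (h s * s))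
  have hfx : f x = 0 := by simp only [f, ← hs_def]; ring
  have hkernel : ∀ y ∈ ({x}ᶜ : Set ℝ), -(1 / 2) * slope f x y =
      (g s * √y * h √y - h s * s * g √y) / (2 * (x - y)) := by
    intro y hy
    have hxy : x - y ≠ 0 := sub_ne_zero.2 (Ne.symm hy)
    rw [slope_def_field, hfx, sub_zero, ← neg_sub x y]
    field_simp
    rfl
  convert ((hasDerivAt_iff_tendsto_slope.mp hf).const_mul (-(1 / 2))).congr'
    (eventually_nhdsWithin_of_forall hkernel) using 2
  field_simp
  ring

/-- Diagonal value of the Bessel kernel: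
`lim_{y→x} K_Bessel^{(a)}(x,y) = [(J_a(√x))² − J_{a+1}(√x) J_{a−1}(√x)]/4`. -/
theorem bessel_kernel_diagonal (a : ℝ) (x : ℝ) (hx : 0 < x) :
    Filter.Tendsto (fun y => besselKernel a x y) (nhdsWithin x {x}ᶜ)
      (nhds (((besselJ a (Real.sqrt x)) ^ 2 -
        besselJ (a + 1) (Real.sqrt x) * besselJ (a - 1) (Real.sqrt x)) / 4)) := by
  have hs : 0 < √x := Real.sqrt_pos.2 hx
  have hJ := hasDerivAt_besselJ a hs
  simp only [besselKernel]
  convert tendsto_sqrt_wronskian_div_sub hx (hJ.differentiableAt.hasDerivAt)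
    (hasDerivAt_deriv_besselJ a hs) using 2
  rw [hJ.deriv, besselJ_sub_one a hs]
  field_simp
  ring
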